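/- Let H be a complex Hilbert space with open unit ball 𝔹, let τ ∈ H with ‖τ‖ = 1, let y ∈ 𝔹, let U be a unitary operator on H with Uτ = M_y(τ), and set m = M_y ∘ U. Then for every k > 1 and every α > k there exists δ > 0 such that for all z ∈ Γ_k = {z ∈ Δ : |z − 1|/(1 − |z|) < k} with |z − 1| < δ, the point m(zτ) lies in the Koranyi region D_α(τ) = {x ∈ 𝔹 : |1 − ⟨x,τ⟩| < (α/2)(1 − ‖x‖²)}. -/

import Mathlib

open Metric

variable {H : Type*} [NormedAddCommGroup H] [InnerProductSpace ℂ H]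

/-- The inner product in the convention of the paper: `⟨x, y⟩` is linear in the
first argument and conjugate-linear in the second. -/
noncomputable def ip (x y : H) : ℂ := inner ℂ y x

/-- The orthogonal projection `P_y` of `H` onto the span of `y`:
`P_y x = (⟨x, y⟩ / ‖y‖²) y` (and `P_0 = 0`, which this formula also yields). -/
noncomputable def Pproj (y x : H) : H := (ip x y / (‖y‖ ^ 2 : ℂ)) • y

/-- `Q_y = I - P_y`. -/
noncomputable def Qproj (y x : H) : H := x - Pproj y x

/-- The Möbius transformation of the unit ball:
`M_y x = (y - P_y x - s Q_y x) / (1 - ⟨x, y⟩)`, where `s = √(1 - ‖y‖²)`. -/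
noncomputable def Mob (y x : H) : H :=
  (1 - ip x y)⁻¹ • (y - Pproj y x - (Real.sqrt (1 - ‖y‖ ^ 2) : ℂ) • Qproj y x)

/-- The Koranyi approach region
`D_α(τ) = {x ∈ 𝔹 : |1 - ⟨x, τ⟩| < (α/2)(1 - ‖x‖²)}` at a boundary point `τ`. -/
noncomputable def koranyiRegion (α : ℝ) (τ : H) : Set H :=
  {x : H | ‖x‖ < 1 ∧ ‖1 - ip x τ‖ < α / 2 * (1 - ‖x‖ ^ 2)}

/-! The Möbius identity
`(1 - ⟨x, y⟩)(1 - ⟨y, w⟩)(1 - ⟨M_y x, M_y w⟩) = (1 - ‖y‖²)(1 - ⟨x, w⟩)`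
turns membership of `M_y x` in `D_α(M_y w)` into the inequality
`|1 - ⟨x, y⟩| |1 - ⟨x, w⟩| < (α/2) |1 - ⟨w, y⟩| (1 - ‖x‖²)`.
For `w = M_y τ`, a unit vector with `M_y w = τ`, we have `U(zτ) = z w`, and with
`b = ⟨w, y⟩ ≠ 1` this reads `|1 - z b| |1 - z| < (α/2) |1 - b| (1 - |z|²)`. On `Γ_k`,
`|1 - z| < k (1 - |z|)`, and `k |1 - z b| < (α/2) |1 - b| (1 + |z|)` holds near `z = 1`
by continuity, since it holds at `z = 1` when `k < α`. -/

open Filter Topology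

lemma ip_self (x : H) : ip x x = (‖x‖ : ℂ) ^ 2 := by
  rw [ip, inner_self_eq_norm_sq_to_K]; rfl

lemma conj_ip (x y : H) : starRingEnd ℂ (ip x y) = ip y x :=
  inner_conj_symm x y

lemma ip_smul_left (c : ℂ) (x y : H) : ip (c • x) y = c * ip x y :=
  inner_smul_right y x c

lemma norm_ip_le (x y : H) : ‖ip x y‖ ≤ ‖x‖ * ‖y‖ :=
  (norm_inner_le_norm y x).trans_eq (mul_comm _ _)

lemma one_sub_ip_symm (x y : H) : 1 - ip y x = starRingEnd ℂ (1 - ip x y) := by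
  rw [map_sub, map_one, conj_ip]

lemma norm_one_sub_ip_symm (x y : H) : ‖1 - ip y x‖ = ‖1 - ip x y‖ := by
  rw [one_sub_ip_symm, Complex.norm_conj]

lemma ip_ne_one {x y : H} (hx : ‖x‖ ≤ 1) (hy : ‖y‖ < 1) : ip x y ≠ 1 := by
  refine ne_of_apply_ne norm (ne_of_lt ?_)
  rw [norm_one]
  exact (norm_ip_le x y).trans_lt (by nlinarith [norm_nonneg x, norm_nonneg y])

lemma norm_one_sub_ip_pos {x y : H} (hx : ip x y ≠ 1) : 0 < ‖1 - ip x y‖ :=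
  norm_pos_iff.mpr (sub_ne_zero.mpr hx.symm)

lemma sq_ofReal_sqrt_one_sub_sq {r : ℝ} (hr : r ^ 2 ≤ 1) :
    ((Real.sqrt (1 - r ^ 2) : ℝ) : ℂ) ^ 2 = 1 - (r : ℂ) ^ 2 := by
  rw [← Complex.ofReal_pow, Real.sq_sqrt (by linarith)]
  push_cast; ring

theorem mul_one_sub_ip_Mob_Mob {y : H} (hy : ‖y‖ ≤ 1) {x w : H} (hx : ip x y ≠ 1)
    (hw : ip w y ≠ 1) :
    (1 - ip x y) * (1 - ip y w) * (1 - ip (Mob y x) (Mob y w))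
      = (1 - (‖y‖ : ℂ) ^ 2) * (1 - ip x w) := by
  rcases eq_or_ne y 0 with rfl | hy0
  · simp [Mob, ip, Pproj, Qproj]
  have hT : (‖y‖ : ℂ) ^ 2 ≠ 0 := by simpa using hy0
  have hs : (‖y‖ : ℂ) ^ 2 = 1 - ((Real.sqrt (1 - ‖y‖ ^ 2) : ℝ) : ℂ) ^ 2 := by
    rw [sq_ofReal_sqrt_one_sub_sq (by nlinarith [norm_nonneg y])]; ring
  have hx' : 1 - ip x y ≠ 0 := sub_ne_zero.mpr hx.symm
  have hw' : 1 - ip y w ≠ 0 := by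
    rw [one_sub_ip_symm, map_ne_zero]
    exact sub_ne_zero.mpr hw.symm
  simp only [Mob, Pproj, Qproj, ip, inner_sub_left, inner_sub_right, inner_smul_left,
    inner_smul_right, inner_self_eq_norm_sq_to_K, map_div₀, map_sub, map_one, map_pow,
    map_inv₀, inner_conj_symm, Complex.conj_ofReal] at hx' hw' ⊢
  generalize (inner ℂ y x : ℂ) = A at *
  generalize (inner ℂ w y : ℂ) = B at *
  generalize (inner ℂ w x : ℂ) = C at *
  generalize ((Real.sqrt (1 - ‖y‖ ^ 2) : ℝ) : ℂ) = s at *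
  generalize (‖y‖ : ℂ) ^ 2 = T at *
  -- with `‖y‖² = 1 - s²` substituted, this is an identity of rational functions
  subst hs
  field_simp
  ring

theorem Mob_Mob {y : H} (hy : ‖y‖ < 1) {x : H} (hx : ip x y ≠ 1) : Mob y (Mob y x) = x := by
  rcases eq_or_ne y 0 with rfl | hy0
  · simp [Mob, ip, Pproj, Qproj]
  have hT : (‖y‖ : ℂ) ^ 2 ≠ 0 := by simpa using hy0
  have hs0 : ((Real.sqrt (1 - ‖y‖ ^ 2) : ℝ) : ℂ) ≠ 0 := by
    rw [Complex.ofReal_ne_zero, Real.sqrt_ne_zero']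
    nlinarith [norm_nonneg y]
  have hs : (‖y‖ : ℂ) ^ 2 = 1 - ((Real.sqrt (1 - ‖y‖ ^ 2) : ℝ) : ℂ) ^ 2 := by
    rw [sq_ofReal_sqrt_one_sub_sq (by nlinarith [norm_nonneg y])]; ring
  have hx' : 1 - ip x y ≠ 0 := sub_ne_zero.mpr hx.symm
  simp only [Mob, Pproj, Qproj, ip, inner_sub_right, inner_smul_right,
    inner_self_eq_norm_sq_to_K] at hx' ⊢
  generalize (inner ℂ y x : ℂ) = A at *
  generalize ((Real.sqrt (1 - ‖y‖ ^ 2) : ℝ) : ℂ) = s at *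
  generalize (‖y‖ : ℂ) ^ 2 = T at *
  subst hs
  match_scalars <;> field_simp <;> ring

theorem norm_one_sub_ip_Mob_Mob {y : H} (hy : ‖y‖ ≤ 1) {x w : H} (hx : ip x y ≠ 1)
    (hw : ip w y ≠ 1) :
    ‖1 - ip x y‖ * ‖1 - ip w y‖ * ‖1 - ip (Mob y x) (Mob y w)‖
      = (1 - ‖y‖ ^ 2) * ‖1 - ip x w‖ := by
  have h := congrArg norm (mul_one_sub_ip_Mob_Mob hy hx hw)
  have hT : ‖1 - (‖y‖ : ℂ) ^ 2‖ = 1 - ‖y‖ ^ 2 := by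
    norm_cast
    exact Real.norm_of_nonneg (by nlinarith [norm_nonneg y])
  rwa [norm_mul, norm_mul, norm_mul, norm_one_sub_ip_symm w y, hT] at h

theorem one_sub_sq_norm_Mob {y : H} (hy : ‖y‖ ≤ 1) {x : H} (hx : ip x y ≠ 1) :
    ‖1 - ip x y‖ ^ 2 * (1 - ‖Mob y x‖ ^ 2) = (1 - ‖y‖ ^ 2) * (1 - ‖x‖ ^ 2) := by
  have h := mul_one_sub_ip_Mob_Mob hy hx hx
  rw [one_sub_ip_symm x y, Complex.mul_conj', ip_self, ip_self] at h
  exact_mod_cast h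

theorem norm_Mob_lt_one {y x : H} (hy : ‖y‖ < 1) (hx : ‖x‖ < 1) : ‖Mob y x‖ < 1 := by
  have hxy := ip_ne_one hx.le hy
  have h := one_sub_sq_norm_Mob hy.le hxy
  have : 0 < ‖1 - ip x y‖ ^ 2 * (1 - ‖Mob y x‖ ^ 2) := by
    rw [h]; exact mul_pos (by nlinarith [norm_nonneg y]) (by nlinarith [norm_nonneg x])
  nlinarith [pos_of_mul_pos_right this (by positivity), norm_nonneg (Mob y x)]

theorem norm_Mob_of_norm_eq_one {y x : H} (hy : ‖y‖ < 1) (hx : ‖x‖ = 1) :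
    ‖Mob y x‖ = 1 := by
  have hxy := ip_ne_one hx.le hy
  have h := one_sub_sq_norm_Mob hy.le hxy
  rw [hx, one_pow, sub_self, mul_zero] at h
  have := (mul_eq_zero.mp h).resolve_left (pow_ne_zero 2 (norm_one_sub_ip_pos hxy).ne')
  nlinarith [norm_nonneg (Mob y x)]

theorem Mob_mem_koranyiRegion_Mob_iff {y x w : H} (hy : ‖y‖ < 1) (hx : ‖x‖ < 1)
    (hw : ip w y ≠ 1) (α : ℝ) :
    Mob y x ∈ koranyiRegion α (Mob y w)
      ↔ ‖1 - ip x y‖ * ‖1 - ip x w‖ < α / 2 * ‖1 - ip w y‖ * (1 - ‖x‖ ^ 2) := by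
  have hxy := ip_ne_one hx.le hy
  have R1 := one_sub_sq_norm_Mob hy.le hxy
  have R2 := norm_one_sub_ip_Mob_Mob hy.le hxy hw
  have hm := norm_one_sub_ip_pos hxy
  have hc := norm_one_sub_ip_pos hw
  have hT : 0 < 1 - ‖y‖ ^ 2 := by nlinarith [norm_nonneg y]
  simp only [koranyiRegion, Set.mem_ofPred_eq, norm_Mob_lt_one hy hx, true_and]
  calc _ ↔ ‖1 - ip x y‖ ^ 2 * ‖1 - ip w y‖ * ‖1 - ip (Mob y x) (Mob y w)‖
        < ‖1 - ip x y‖ ^ 2 * ‖1 - ip w y‖ * (α / 2 * (1 - ‖Mob y x‖ ^ 2)) :=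
        (mul_lt_mul_iff_right₀ (by positivity)).symm
    _ ↔ (1 - ‖y‖ ^ 2) * (‖1 - ip x y‖ * ‖1 - ip x w‖)
        < (1 - ‖y‖ ^ 2) * (α / 2 * ‖1 - ip w y‖ * (1 - ‖x‖ ^ 2)) := by
      rw [show ‖1 - ip x y‖ ^ 2 * ‖1 - ip w y‖ * ‖1 - ip (Mob y x) (Mob y w)‖
          = (1 - ‖y‖ ^ 2) * (‖1 - ip x y‖ * ‖1 - ip x w‖) by
          linear_combination ‖1 - ip x y‖ * R2,
        show ‖1 - ip x y‖ ^ 2 * ‖1 - ip w y‖ * (α / 2 * (1 - ‖Mob y x‖ ^ 2))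
          = (1 - ‖y‖ ^ 2) * (α / 2 * ‖1 - ip w y‖ * (1 - ‖x‖ ^ 2)) by
          linear_combination (α / 2 * ‖1 - ip w y‖) * R1]
    _ ↔ _ := mul_lt_mul_iff_right₀ hT

theorem eventually_norm_one_sub_mul_mul_lt_of_stolz {b : ℂ} (hb : b ≠ 1) {k α : ℝ}
    (hkα : k < α) :
    ∀ᶠ z in 𝓝 (1 : ℂ), ‖z‖ < 1 → ‖z - 1‖ < k * (1 - ‖z‖) →
      ‖1 - z * b‖ * ‖1 - z‖ < α / 2 * ‖1 - b‖ * (1 - ‖z‖ ^ 2) := by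
  have hc : 0 < ‖1 - b‖ := norm_pos_iff.mpr (sub_ne_zero.mpr hb.symm)
  have hnear :
      ∀ᶠ z in 𝓝 (1 : ℂ), k * ‖1 - z * b‖ < α / 2 * ‖1 - b‖ * (1 + ‖z‖) := by
    refine ContinuousAt.eventually_lt (by fun_prop) (by fun_prop) ?_
    norm_num
    nlinarith
  filter_upwards [hnear] with z hz hz1 hzk
  rw [norm_sub_rev] at hzk
  calc ‖1 - z * b‖ * ‖1 - z‖ ≤ k * ‖1 - z * b‖ * (1 - ‖z‖) := by
        rw [mul_comm k, mul_assoc]; gcongr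
    _ < α / 2 * ‖1 - b‖ * (1 + ‖z‖) * (1 - ‖z‖) := by gcongr
    _ = α / 2 * ‖1 - b‖ * (1 - ‖z‖ ^ 2) := by ring

/-- with `m = M_y ∘ U` (`U` unitary, `U τ = M_y τ`), for every `k > 1`
and `α > k`, the point `m(zτ)` lies in the Koranyi region `D_α(τ)` whenever `z`
lies in the nontangential region `Γ_k = {z ∈ Δ : |z - 1|/(1 - |z|) < k}` and is
close enough to `1`. -/
theorem image_of_stolz_in_koranyi (y τ : H) (hy : ‖y‖ < 1) (hτ : ‖τ‖ = 1)
    (U : H ≃ₗᵢ[ℂ] H) (hU : U τ = Mob y τ) :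
    ∀ k : ℝ, 1 < k → ∀ α : ℝ, k < α → ∃ δ > 0, ∀ z : ℂ,
      ‖z‖ < 1 → ‖z - 1‖ < k * (1 - ‖z‖) →
      ‖z - 1‖ < δ →
      Mob y (U (z • τ)) ∈ koranyiRegion α τ := by
  intro k _ α hkα
  set w := Mob y τ
  have hw : ‖w‖ = 1 := norm_Mob_of_norm_eq_one hy hτ
  have hwy : ip w y ≠ 1 := ip_ne_one hw.le hy
  have hMw : Mob y w = τ := Mob_Mob hy (ip_ne_one hτ.le hy)
  obtain ⟨δ, hδ, hnear⟩ := Metric.eventually_nhds_iff.mp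
    (eventually_norm_one_sub_mul_mul_lt_of_stolz hwy hkα)
  refine ⟨δ, hδ, fun z hz hzk hzδ => ?_⟩
  have hzw : ‖z • w‖ < 1 := by rwa [norm_smul, hw, mul_one]
  rw [map_smul, hU, ← hMw, Mob_mem_koranyiRegion_Mob_iff hy hzw hwy, ip_smul_left,
    ip_smul_left, ip_self, norm_smul, hw]
  simpa using hnear (by rwa [dist_eq_norm]) hz hzk
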